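/- arXiv:1604.05364 — 3 statements merged into one kernel-verified Lean document; each statement's English description precedes it below -/
import Mathlib

section
/- Let V be a finite type and G : SimpleGraph V a tree (connected and acyclic). For any two vertices A and B of G, the graph-theoretic distance dist_G(A,B) equals the number of edges e of G such that A and B lie in different connected components of the graph obtained from G by deleting e (i.e., such that A is not reachable from B after deleting e). -/
/-!
Take a shortest walk from `A` to `B`; it is a path, of length `dist A B`. Every walk from `A` to
`B` uses every separating edge, so the separating edges lie on this path. Conversely, if an edge
`e` of the path did not separate, a walk avoiding `e` would shorten to a second path from `A` to
`B` without `e`, contradicting uniqueness of paths in an acyclic graph. So the separating edges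
are exactly the (pairwise distinct) edges of the path.
-/

namespace SimpleGraph

variable {V : Type*} {G : SimpleGraph V} {u v : V}

lemma IsAcyclic.not_reachable_deleteEdges_of_mem_edges (hG : G.IsAcyclic) {p : G.Walk u v}
    (hp : p.IsPath) {e : Sym2 V} (he : e ∈ p.edges) : ¬ (G.deleteEdges {e}).Reachable u v := by
  classical
  rintro ⟨q⟩
  let q' : G.Walk u v := q.mapLe (G.deleteEdges_le _)
  have hpq : p = q'.bypass :=
    congrArg Subtype.val ((hG.subsingleton_path u v).elim ⟨p, hp⟩ ⟨_, q'.bypass_isPath⟩)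
  have he_q : e ∈ q.edges := by
    simpa [q', Walk.edges_mapLe_eq_edges] using q'.edges_bypass_subset_edges (hpq ▸ he)
  simpa using q.edges_subset_edgeSet he_q

lemma IsAcyclic.setOf_separating_eq_edges (hG : G.IsAcyclic) {p : G.Walk u v}
    (hp : p.IsPath) :
    {e : Sym2 V | e ∈ G.edgeSet ∧ ¬ (G.deleteEdges {e}).Reachable u v} = {e | e ∈ p.edges} := by
  ext e
  constructor
  · rintro ⟨-, hsep⟩
    exact p.mem_edges_of_not_reachable_deleteEdges hsep
  · intro he
    exact ⟨p.edges_subset_edgeSet he, hG.not_reachable_deleteEdges_of_mem_edges hp he⟩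

lemma Walk.IsPath.ncard_edges {p : G.Walk u v} (hp : p.IsPath) :
    {e | e ∈ p.edges}.ncard = p.length := by
  classical
  rw [← List.coe_toFinset, Set.ncard_coe_finset, List.toFinset_card_of_nodup hp.edges_nodup,
    Walk.length_edges]

end SimpleGraph

theorem dist_eq_ncard_separating_edges_general {V : Type*}
    (G : SimpleGraph V) (hconn : G.Connected) (hacyc : G.IsAcyclic)
    (A B : V) :
    G.dist A B =
      {e : Sym2 V | e ∈ G.edgeSet ∧
        ¬ (G.deleteEdges {e}).Reachable A B}.ncard := by
  obtain ⟨p, hp, hlen⟩ := hconn.exists_path_of_dist A B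
  rw [hacyc.setOf_separating_eq_edges hp, hp.ncard_edges, hlen]

/-- In a tree, the graph-theoretic distance between two vertices `A` and `B`
equals the number of edges whose deletion disconnects `A` from `B`. -/
theorem dist_eq_ncard_separating_edges {V : Type*} [Fintype V]
    (G : SimpleGraph V) (hconn : G.Connected) (hacyc : G.IsAcyclic)
    (A B : V) :
    G.dist A B =
      {e : Sym2 V | e ∈ G.edgeSet ∧
        ¬ (G.deleteEdges {e}).Reachable A B}.ncard :=
  dist_eq_ncard_separating_edges_general G hconn hacyc A B
end

section
/- Let V be a finite type, let 𝒯 denote the (finite) set of trees on V (simple graphs G : SimpleGraph V that are connected and acyclic), and let μ : 𝒯 → ℝ be a probability mass function (μ ≥ 0 and ∑_{T ∈ 𝒯} μ(T) = 1). Say that a tree T displays the split S | Sᶜ (for S ⊆ V with S and Sᶜ nonempty) if there exists an edge e of T such that for all vertices x, y, x and y are reachable from one another in T with e deleted if and only if (x ∈ S ↔ y ∈ S). Then for any two vertices A and B: ∑_{T ∈ 𝒯} μ(T) · dist_T(A,B) = ∑_{S ⊆ V, A ∈ S, B ∉ S} ( ∑_{T displays S | Sᶜ} μ(T) ). That is,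 the expected graph-theoretic distance between A and B is determined by the split probabilities P_μ(S | Sᶜ) = ∑_{T displays S | Sᶜ} μ(T). -/
/-- A tree `T` displays the split `S | Sᶜ` if some edge of `T`, when deleted,
leaves exactly `S` and `Sᶜ` as the two connected components. -/
def SimpleGraph.DisplaysSplit {V : Type*} (T : SimpleGraph V) (S : Finset V) : Prop :=
  ∃ e ∈ T.edgeSet, ∀ x y : V,
    (T.deleteEdges {e}).Reachable x y ↔ (x ∈ S ↔ y ∈ S)

/-!
Fix a tree `T` and the path from `A` to `B`. Deleting an edge `e` of a connected graph leaves at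
most two components, so `e` displays exactly one split, namely the component of `A` in `T - e`
against the rest. This split separates `A` from `B` iff `e` lies on the path, and distinct edges
of a tree give distinct splits because each edge is a bridge. Hence the splits of `T` separating
`A` and `B` are counted by `dist_T(A, B)`, and summing against `μ` and exchanging the two sums
gives the theorem.
-/

namespace SimpleGraph

open Finset

variable {V : Type*} {G : SimpleGraph V} {a b : V}

theorem Walk.reachable_deleteEdges_or (u v : V) {x y : V} (p : G.Walk x y) :
    (G.deleteEdges {s(u, v)}).Reachable x y ∨ (G.deleteEdges {s(u, v)}).Reachable x u ∨
      (G.deleteEdges {s(u, v)}).Reachable x v := by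
  induction p with
  | nil => exact .inl .rfl
  | @cons x z y hxz p ih =>
    by_cases he : s(x, z) = s(u, v)
    · rcases Sym2.eq_iff.mp he with ⟨rfl, -⟩ | ⟨rfl, -⟩
      exacts [.inr (.inl .rfl), .inr (.inr .rfl)]
    · have hxz' : (G.deleteEdges {s(u, v)}).Adj x z := by simp [hxz, he]
      exact ih.imp hxz'.reachable.trans (.imp hxz'.reachable.trans hxz'.reachable.trans)

theorem Connected.reachable_deleteEdges_left_or_right (hG : G.Connected) (u v x : V) :
    (G.deleteEdges {s(u, v)}).Reachable x u ∨ (G.deleteEdges {s(u, v)}).Reachable x v :=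
  or_self_left.mp ((hG x u).some.reachable_deleteEdges_or u v)

theorem Connected.reachable_deleteEdges_iff (hG : G.Connected) (e : Sym2 V) (a x y : V) :
    (G.deleteEdges {e}).Reachable x y ↔
      ((G.deleteEdges {e}).Reachable x a ↔ (G.deleteEdges {e}).Reachable y a) := by
  induction e using Sym2.ind with | h u v => ?_
  refine ⟨fun h => ⟨h.symm.trans, h.trans⟩, fun h => ?_⟩
  by_cases hx : (G.deleteEdges {s(u, v)}).Reachable x a
  · exact hx.trans (h.mp hx).symm
  obtain ⟨w, hw⟩ : ∃ w, ∀ z, ¬ (G.deleteEdges {s(u, v)}).Reachable z a →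
      (G.deleteEdges {s(u, v)}).Reachable z w := by
    rcases hG.reachable_deleteEdges_left_or_right u v a with ha | ha
    · exact ⟨v, fun z hz => (hG.reachable_deleteEdges_left_or_right u v z).resolve_left
        fun hzu => hz (hzu.trans ha.symm)⟩
    · exact ⟨u, fun z hz => (hG.reachable_deleteEdges_left_or_right u v z).resolve_right
        fun hzv => hz (hzv.trans ha.symm)⟩
  exact (hw x hx).trans (hw y (mt h.mpr hx)).symm

theorem IsAcyclic.mem_edges_iff_not_reachable_deleteEdges (hG : G.IsAcyclic) {w : G.Walk a b}
    (hw : w.IsPath) (e : Sym2 V) : e ∈ w.edges ↔ ¬ (G.deleteEdges {e}).Reachable a b := by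
  classical
  refine ⟨fun he hab => ?_, w.mem_edges_of_not_reachable_deleteEdges⟩
  induction e using Sym2.ind with | h u v => ?_
  obtain ⟨p, hp⟩ := reachable_deleteEdges_iff_exists_walk.mp hab
  have hwp : w = p.bypass :=
    congrArg Subtype.val ((hG.subsingleton_path a b).elim ⟨w, hw⟩ ⟨p.bypass, p.bypass_isPath⟩)
  exact hp (p.edges_bypass_subset_edges (hwp ▸ he))

section Fintype

variable [Fintype V]

open Classical in
noncomputable def edgeSide (G : SimpleGraph V) (e : Sym2 V) (a : V) : Finset V :=
  {x | (G.deleteEdges {e}).Reachable x a}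

@[simp]
theorem mem_edgeSide {e : Sym2 V} {x : V} :
    x ∈ G.edgeSide e a ↔ (G.deleteEdges {e}).Reachable x a := by
  simp only [edgeSide, mem_filter, mem_univ, true_and]

theorem Connected.displaysSplit_iff (hG : G.Connected) {S : Finset V} (ha : a ∈ S) :
    G.DisplaysSplit S ↔ ∃ e ∈ G.edgeSet, G.edgeSide e a = S := by
  constructor
  · rintro ⟨e, he, hS⟩
    exact ⟨e, he, Finset.ext fun x => by simp [hS x a, ha]⟩
  · rintro ⟨e, he, rfl⟩
    exact ⟨e, he, fun x y => by rw [mem_edgeSide, mem_edgeSide, hG.reachable_deleteEdges_iff e a]⟩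

theorem IsTree.injOn_edgeSide (hG : G.IsTree) (a : V) :
    Set.InjOn (G.edgeSide · a) G.edgeSet := by
  intro e₁ _ e₂ he₂ hside
  by_contra hne
  induction e₂ using Sym2.ind with | h u v => ?_
  have huv : G.Adj u v := he₂
  apply isAcyclic_iff_forall_adj_isBridge.mp hG.isAcyclic huv
  have hadj : (G.deleteEdges {e₁}).Adj u v := by simp [huv, Ne.symm hne]
  rw [hG.connected.reachable_deleteEdges_iff _ a, ← mem_edgeSide, ← mem_edgeSide,
    ← show G.edgeSide e₁ a = G.edgeSide s(u, v) a from hside, mem_edgeSide, mem_edgeSide]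
  exact ⟨hadj.symm.reachable.trans, hadj.reachable.trans⟩

open Classical in
theorem IsTree.card_displaysSplit_separating_eq_dist (hG : G.IsTree) (a b : V) :
    #{S : Finset V | (a ∈ S ∧ b ∉ S) ∧ G.DisplaysSplit S} = G.dist a b := by
  obtain ⟨w, hw⟩ := (hG.connected a b).exists_walk_length_eq_dist
  have hpath := w.isPath_of_length_eq_dist hw
  have hsep := hG.isAcyclic.mem_edges_iff_not_reachable_deleteEdges hpath
  have himage : ({S : Finset V | (a ∈ S ∧ b ∉ S) ∧ G.DisplaysSplit S} : Finset _) =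
      w.edges.toFinset.image (G.edgeSide · a) := by
    ext S
    simp only [mem_filter, mem_univ, true_and, mem_image, List.mem_toFinset]
    constructor
    · rintro ⟨⟨ha, hb⟩, hS⟩
      obtain ⟨e, -, rfl⟩ := (hG.connected.displaysSplit_iff ha).mp hS
      exact ⟨e, (hsep e).mpr fun hab => hb (mem_edgeSide.mpr hab.symm), rfl⟩
    · rintro ⟨e, he, rfl⟩
      have ha : a ∈ G.edgeSide e a := mem_edgeSide.mpr .rfl
      refine ⟨⟨ha, fun hb => (hsep e).mp he (mem_edgeSide.mp hb).symm⟩, ?_⟩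
      exact (hG.connected.displaysSplit_iff ha).mpr ⟨e, w.edges_subset_edgeSet he, rfl⟩
  rw [himage, card_image_of_injOn ((hG.injOn_edgeSide a).mono fun e he =>
      w.edges_subset_edgeSet (List.mem_toFinset.mp he)),
    List.toFinset_card_of_nodup hpath.edges_nodup, w.length_edges, hw]

end Fintype

end SimpleGraph

open Classical in
theorem expected_dist_eq_sum_split_probabilities_general {V : Type*} [Fintype V]
    [Fintype {G : SimpleGraph V // G.Connected ∧ G.IsAcyclic}]
    (μ : {G : SimpleGraph V // G.Connected ∧ G.IsAcyclic} → ℝ)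
    (A B : V) :
    ∑ T, μ T * ((T : SimpleGraph V).dist A B : ℝ) =
      ∑ S ∈ Finset.univ.filter (fun S : Finset V => A ∈ S ∧ B ∉ S),
        ∑ T ∈ Finset.univ.filter
            (fun T : {G : SimpleGraph V // G.Connected ∧ G.IsAcyclic} =>
              (T : SimpleGraph V).DisplaysSplit S),
          μ T := by
  calc ∑ T, μ T * ((T : SimpleGraph V).dist A B : ℝ)
      = ∑ T : {G : SimpleGraph V // G.Connected ∧ G.IsAcyclic}, ∑ S ∈ Finset.univ.filter
          (fun S : Finset V => (A ∈ S ∧ B ∉ S) ∧ (T : SimpleGraph V).DisplaysSplit S), μ T := by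
        refine Finset.sum_congr rfl fun T _ => ?_
        rw [Finset.sum_const, nsmul_eq_mul, mul_comm,
          (⟨T.2.1, T.2.2⟩ : (T : SimpleGraph V).IsTree).card_displaysSplit_separating_eq_dist]
    _ = _ := Finset.sum_comm' fun S T => by simp only [Finset.mem_filter, Finset.mem_univ]; tauto

open Classical in
/-- The expected graph-theoretic distance between `A` and `B` under a
distribution `μ` on trees equals the sum, over splits `S | Sᶜ` separating `A`
from `B`, of the probability that a tree displays that split.  Hence the
split probabilities determine the expected USTAR distance matrix. -/
theorem expected_dist_eq_sum_split_probabilities {V : Type*} [Fintype V]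
    [Fintype {G : SimpleGraph V // G.Connected ∧ G.IsAcyclic}]
    (μ : {G : SimpleGraph V // G.Connected ∧ G.IsAcyclic} → ℝ)
    (hμ : ∀ T, 0 ≤ μ T) (hsum : ∑ T, μ T = 1) (A B : V) :
    ∑ T, μ T * ((T : SimpleGraph V).dist A B : ℝ) =
      ∑ S ∈ Finset.univ.filter (fun S : Finset V => A ∈ S ∧ B ∉ S),
        ∑ T ∈ Finset.univ.filter
            (fun T : {G : SimpleGraph V // G.Connected ∧ G.IsAcyclic} =>
              (T : SimpleGraph V).DisplaysSplit S),
          μ T :=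
  expected_dist_eq_sum_split_probabilities_general μ A B
end

section
/- Let X be a type, D, D' : X → X → ℝ symmetric functions with D(x,x) = 0 and D'(x,x) = 0 for all x, let c : ℝ and f : X → ℝ, and suppose D'(x,y) = D(x,y) + c − f(x) − f(y) whenever x ≠ y. Assume (i) D satisfies the four-point condition: for all pairwise distinct a, b, u, v ∈ X there is a relabeling of {a,b,u,v} such that D(a,u)+D(b,v) = D(a,v)+D(b,u) ≥ D(a,b)+D(u,v); and (ii) D' satisfies the triangle inequality: D'(a,u) + D'(b,u) ≥ D'(a,b) for all a, b, u ∈ X. Then D' satisfies the four-point condition for every 4-tuple of points of X, including tuples with repeated entries: for all a, b, u, v ∈ X there is a relabeling such that D'(a,u)+D'(b,v) = D'(a,v)+D'(b,u) ≥ D'(a,b)+D'(u,v), and when a, b, u, v are pairwise distinct the relabeling can be taken to be the same one that works for D. -/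
/-!
Off the diagonal, `D'` is `D` plus the term `c - f x - f y`, and each side of the four-point
relation for a quadruple of distinct points contains every point exactly once, so the perturbation
contributes `2c - f a - f b - f u - f v` to every side and the relation transfers verbatim from `D`
to `D'`. When two points coincide, the relation is a triangle inequality for `D'`.
-/

/-- The four-point relation for `D` relative to the quartet pairing `ab | uv`:
the two sums crossing the pairing are equal and dominate the sum within the
pairing. -/
def FourPt {X : Type*} (D : X → X → ℝ) (a b u v : X) : Prop :=
  D a u + D b v = D a v + D b u ∧ D a v + D b u ≥ D a b + D u v

section FourPt

variable {X : Type*} {D D' : X → X → ℝ}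

theorem FourPt.of_left_eq (hsymm : ∀ x y : X, D' x y = D' y x) (hdiag : ∀ x : X, D' x x = 0)
    (htri : ∀ a b u : X, D' a u + D' b u ≥ D' a b) (a u v : X) : FourPt D' a a u v := by
  refine ⟨add_comm _ _, ?_⟩
  rw [hdiag a, zero_add, hsymm a v, hsymm a u, add_comm]
  exact htri u v a

theorem FourPt.of_right_eq (hdiag : ∀ x : X, D' x x = 0)
    (htri : ∀ a b u : X, D' a u + D' b u ≥ D' a b) (a b u : X) : FourPt D' a b u u := by
  refine ⟨rfl, ?_⟩
  rw [hdiag u, add_zero]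
  exact htri a b u

theorem FourPt.of_offDiag_eq_add_sub_sub {c : ℝ} {f : X → ℝ}
    (hD' : ∀ x y : X, x ≠ y → D' x y = D x y + c - f x - f y) {a b u v : X}
    (hab : a ≠ b) (hau : a ≠ u) (hav : a ≠ v) (hbu : b ≠ u) (hbv : b ≠ v) (huv : u ≠ v)
    (h : FourPt D a b u v) : FourPt D' a b u v := by
  obtain ⟨h_eq, h_ge⟩ := h
  constructor
  · rw [hD' a u hau, hD' b v hbv, hD' a v hav, hD' b u hbu]; linarith
  · rw [hD' a v hav, hD' b u hbu, hD' a b hab, hD' u v huv]; linarith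

theorem fourPt_or_of_not_pairwise_ne (hsymm : ∀ x y : X, D' x y = D' y x)
    (hdiag : ∀ x : X, D' x x = 0) (htri : ∀ a b u : X, D' a u + D' b u ≥ D' a b) {a b u v : X}
    (h : a = b ∨ a = u ∨ a = v ∨ b = u ∨ b = v ∨ u = v) :
    FourPt D' a b u v ∨ FourPt D' a u b v ∨ FourPt D' a v b u := by
  rcases h with rfl | rfl | rfl | rfl | rfl | rfl
  · exact .inl (.of_left_eq hsymm hdiag htri _ _ _)
  · exact .inr (.inl (.of_left_eq hsymm hdiag htri _ _ _))
  · exact .inr (.inr (.of_left_eq hsymm hdiag htri _ _ _))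
  · exact .inr (.inr (.of_right_eq hdiag htri _ _ _))
  · exact .inr (.inl (.of_right_eq hdiag htri _ _ _))
  · exact .inl (.of_right_eq hdiag htri _ _ _)

end FourPt

theorem four_point_condition_all_tuples_general {X : Type*}
    (D D' : X → X → ℝ)
    (hD'symm : ∀ x y : X, D' x y = D' y x) (hD'diag : ∀ x : X, D' x x = 0)
    (c : ℝ) (f : X → ℝ)
    (hD' : ∀ x y : X, x ≠ y → D' x y = D x y + c - f x - f y)
    (hfour : ∀ a b u v : X, a ≠ b → a ≠ u → a ≠ v → b ≠ u → b ≠ v → u ≠ v →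
      FourPt D a b u v ∨ FourPt D a u b v ∨ FourPt D a v b u)
    (htri : ∀ a b u : X, D' a u + D' b u ≥ D' a b) :
    (∀ a b u v : X,
      FourPt D' a b u v ∨ FourPt D' a u b v ∨ FourPt D' a v b u) ∧
    (∀ a b u v : X, a ≠ b → a ≠ u → a ≠ v → b ≠ u → b ≠ v → u ≠ v →
      ((FourPt D a b u v → FourPt D' a b u v) ∧
       (FourPt D a u b v → FourPt D' a u b v) ∧
       (FourPt D a v b u → FourPt D' a v b u))) := by
  have transfer : ∀ a b u v : X, a ≠ b → a ≠ u → a ≠ v → b ≠ u → b ≠ v → u ≠ v →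
      ((FourPt D a b u v → FourPt D' a b u v) ∧
       (FourPt D a u b v → FourPt D' a u b v) ∧
       (FourPt D a v b u → FourPt D' a v b u)) :=
    fun a b u v hab hau hav hbu hbv huv =>
      ⟨.of_offDiag_eq_add_sub_sub hD' hab hau hav hbu hbv huv,
        .of_offDiag_eq_add_sub_sub hD' hau hab hav hbu.symm huv hbv,
        .of_offDiag_eq_add_sub_sub hD' hav hab hau hbv.symm huv.symm hbu⟩
  refine ⟨fun a b u v => ?_, transfer⟩
  by_cases hdist : a ≠ b ∧ a ≠ u ∧ a ≠ v ∧ b ≠ u ∧ b ≠ v ∧ u ≠ v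
  · obtain ⟨hab, hau, hav, hbu, hbv, huv⟩ := hdist
    have ⟨h₁, h₂, h₃⟩ := transfer a b u v hab hau hav hbu hbv huv
    exact (hfour a b u v hab hau hav hbu hbv huv).imp h₁ (Or.imp h₂ h₃)
  · exact fourPt_or_of_not_pairwise_ne hD'symm hD'diag htri (by tauto)

/-- If `D` is a dissimilarity satisfying the four-point condition on pairwise
distinct quadruples (for some relabeling, i.e. one of the three pairings), and
`D'` is a dissimilarity differing from `D` off the diagonal by
`c - f x - f y` and satisfying the triangle inequality, then `D'` satisfies
the four-point condition for every 4-tuple (repeats allowed), and on pairwise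
distinct quadruples any pairing that works for `D` also works for `D'`. -/
theorem four_point_condition_all_tuples {X : Type*}
    (D D' : X → X → ℝ)
    (hDsymm : ∀ x y : X, D x y = D y x) (hDdiag : ∀ x : X, D x x = 0)
    (hD'symm : ∀ x y : X, D' x y = D' y x) (hD'diag : ∀ x : X, D' x x = 0)
    (c : ℝ) (f : X → ℝ)
    (hD' : ∀ x y : X, x ≠ y → D' x y = D x y + c - f x - f y)
    (hfour : ∀ a b u v : X, a ≠ b → a ≠ u → a ≠ v → b ≠ u → b ≠ v → u ≠ v →
      FourPt D a b u v ∨ FourPt D a u b v ∨ FourPt D a v b u)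
    (htri : ∀ a b u : X, D' a u + D' b u ≥ D' a b) :
    (∀ a b u v : X,
      FourPt D' a b u v ∨ FourPt D' a u b v ∨ FourPt D' a v b u) ∧
    (∀ a b u v : X, a ≠ b → a ≠ u → a ≠ v → b ≠ u → b ≠ v → u ≠ v →
      ((FourPt D a b u v → FourPt D' a b u v) ∧
       (FourPt D a u b v → FourPt D' a u b v) ∧
       (FourPt D a v b u → FourPt D' a v b u))) :=
  four_point_condition_all_tuples_general D D' hD'symm hD'diag c f hD' hfour htri
end
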